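/- arXiv:2404.01798 — 2 statements merged into one kernel-verified Lean document; each statement's English description precedes it below -/
import Mathlib

section
/- Let p ∈ ℂ[X] be a monic polynomial of degree n ≥ 1, let k, b ∈ ℂ with k ≠ 0, and set q = C(kⁿ) · (p.comp(C(k⁻¹) · (X − C b))) ∈ ℂ[X]. If u : ℂ → ℂ is infinitely differentiable and satisfies Σ_{j=0}^{n} pⱼ · u⁽ʲ⁾(t) = 0 for all t ∈ ℂ, then the function v(t) = exp(b·t) · u(k·t) satisfies Σ_{j=0}^{n} qⱼ · v⁽ʲ⁾(t) = 0 for all t ∈ ℂ, where pⱼ, qⱼ denote the coefficients of Xʲ in p and q respectively. Moreover q is monic of degree n. -/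
/-!
Conjugating by `s ↦ exp (b s)` shifts the operator `d/dt` to `d/dt + b` (exponential shift),
and the substitution `s ↦ k s` rescales `d/dt` by `k`. Hence `q(d/dt)` applied to
`exp (b ·) · u (k ·)` is `exp (b t)` times `q(d/dt + b)` applied to `u (k ·)`, and
`q (X + b) = kⁿ p (X / k)` turns this into `exp (b t) · kⁿ · (p(d/dt) u)(k t) = 0`.
-/

open Polynomial Finset
open scoped ContDiff

namespace Polynomial

section DiffOp

variable {𝕜 : Type*} [NontriviallyNormedField 𝕜]

/-- `p.diffOp u t` is `(p(d/dt) u)(t)`. -/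
noncomputable def diffOp (p : 𝕜[X]) (u : 𝕜 → 𝕜) (t : 𝕜) : 𝕜 :=
  p.sum fun j a => a * iteratedDeriv j u t

theorem diffOp_eq_sum_range {p : 𝕜[X]} {N : ℕ} (hN : p.natDegree < N) (u : 𝕜 → 𝕜) (t : 𝕜) :
    p.diffOp u t = ∑ j ∈ range N, p.coeff j * iteratedDeriv j u t :=
  sum_over_range' p (f := fun j a => a * iteratedDeriv j u t) (fun _ => zero_mul _) N hN

theorem diffOp_add (p q : 𝕜[X]) (u : 𝕜 → 𝕜) (t : 𝕜) :
    (p + q).diffOp u t = p.diffOp u t + q.diffOp u t :=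
  sum_add_index p q _ (fun _ => zero_mul _) fun _ _ _ => add_mul _ _ _

theorem diffOp_monomial (j : ℕ) (a : 𝕜) (u : 𝕜 → 𝕜) (t : 𝕜) :
    (monomial j a).diffOp u t = a * iteratedDeriv j u t :=
  sum_monomial_index a _ (zero_mul _)

theorem diffOp_C_mul (a : 𝕜) (p : 𝕜[X]) (u : 𝕜 → 𝕜) (t : 𝕜) :
    (C a * p).diffOp u t = a * p.diffOp u t := by
  rw [C_mul', diffOp, diffOp, sum_smul_index _ _ _ fun _ => zero_mul _, Polynomial.sum,
    Polynomial.sum, mul_sum]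
  simp only [mul_assoc]

theorem diffOp_comp_C_mul_X {u : 𝕜 → 𝕜} (hu : ContDiff 𝕜 ∞ u) (p : 𝕜[X]) (c t : 𝕜) :
    p.diffOp (fun s => u (c * s)) t = (p.comp (C c * X)).diffOp u (c * t) := by
  induction p using Polynomial.induction_on' with
  | add p q hp hq => rw [add_comp, diffOp_add, diffOp_add, hp, hq]
  | monomial j a =>
    have hcomp : (monomial j a).comp (C c * X) = monomial j (a * c ^ j) := by
      rw [monomial_comp, mul_pow, ← C_pow, ← mul_assoc, ← C_mul, C_mul_X_pow_eq_monomial]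
    rw [hcomp, diffOp_monomial, diffOp_monomial,
      iteratedDeriv_comp_const_mul (hu.of_le (by exact_mod_cast le_top)), mul_assoc]

end DiffOp

theorem diffOp_cexp_mul {w : ℂ → ℂ} (hw : ContDiff ℂ ∞ w) (p : ℂ[X]) (b t : ℂ) :
    p.diffOp (fun s => Complex.exp (b * s) * w s) t
      = Complex.exp (b * t) * (p.comp (X + C b)).diffOp w t := by
  induction p using Polynomial.induction_on' with
  | add p q hp hq => rw [add_comp, diffOp_add, diffOp_add, hp, hq, mul_add]
  | monomial j a =>
    have hdeg : (C a * (X + C b) ^ j).natDegree < j + 1 :=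
      Nat.lt_succ_of_le (natDegree_C_mul_le _ _ |>.trans (by simp))
    have hexp : ContDiffAt ℂ j (fun s => Complex.exp (b * s)) t := by fun_prop
    have hcomm : (fun s => Complex.exp (b * s) * w s) = fun s => w s * Complex.exp (b * s) :=
      _root_.funext fun _ => mul_comm _ _
    rw [hcomm, diffOp_monomial, monomial_comp, diffOp_eq_sum_range hdeg,
      iteratedDeriv_fun_mul (hw.contDiffAt.of_le (by exact_mod_cast le_top)) hexp,
      mul_sum, mul_sum]
    simp only [iteratedDeriv_cexp_const_mul]
    refine sum_congr rfl fun i _ => ?_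
    rw [coeff_C_mul, coeff_X_add_C_pow]
    ring

section Affine

variable {K : Type*} [Field K]

theorem natDegree_comp_C_mul_X_sub_C (p : K[X]) {c : K} (hc : c ≠ 0) (b : K) :
    (p.comp (C c * (X - C b))).natDegree = p.natDegree := by
  rw [natDegree_comp, natDegree_C_mul hc, natDegree_X_sub_C, mul_one]

theorem leadingCoeff_comp_C_mul_X_sub_C (p : K[X]) {c : K} (hc : c ≠ 0) (b : K) :
    (p.comp (C c * (X - C b))).leadingCoeff = p.leadingCoeff * c ^ p.natDegree := by
  rw [leadingCoeff_comp (by rw [natDegree_C_mul hc, natDegree_X_sub_C]; exact one_ne_zero),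
    leadingCoeff_mul, leadingCoeff_C, leadingCoeff_X_sub_C, mul_one]

end Affine

end Polynomial

theorem transformed_solution_solves_transformed_ode_general
    (p : ℂ[X]) (n : ℕ) (hmonic : p.Monic) (hdeg : p.natDegree = n)
    (k b : ℂ) (hk : k ≠ 0)
    (q : ℂ[X]) (hq : q = C (k ^ n) * p.comp (C k⁻¹ * (X - C b)))
    (u : ℂ → ℂ) (hu : ContDiff ℂ ⊤ u)
    (hode : ∀ t : ℂ,
      ∑ j ∈ Finset.range (n + 1), p.coeff j * iteratedDeriv j u t = 0) :
    (∀ t : ℂ,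
      ∑ j ∈ Finset.range (n + 1),
        q.coeff j * iteratedDeriv j (fun s : ℂ => Complex.exp (b * s) * u (k * s)) t = 0)
    ∧ q.Monic ∧ q.natDegree = n := by
  have hqdeg : q.natDegree = n := by
    rw [hq, natDegree_C_mul (pow_ne_zero n hk), natDegree_comp_C_mul_X_sub_C p (inv_ne_zero hk),
      hdeg]
  have hqmonic : q.Monic := by
    rw [Monic, hq, leadingCoeff_mul, leadingCoeff_C,
      leadingCoeff_comp_C_mul_X_sub_C p (inv_ne_zero hk), hmonic.leadingCoeff, hdeg, one_mul,
      ← mul_pow, mul_inv_cancel₀ hk, one_pow]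
  refine ⟨fun t => ?_, hqmonic, hqdeg⟩
  have hshift : q.comp (X + C b) = C (k ^ n) * p.comp (C k⁻¹ * X) := by
    rw [hq, mul_comp, C_comp, comp_assoc, mul_comp, C_comp, sub_comp, X_comp, C_comp,
      add_sub_cancel_right]
  have hrescale : (p.comp (C k⁻¹ * X)).comp (C k * X) = p := by
    rw [comp_assoc, mul_comp, C_comp, X_comp, ← mul_assoc, ← C_mul, inv_mul_cancel₀ hk, C_1,
      one_mul, comp_X]
  have hw : ContDiff ℂ ∞ fun s => u (k * s) := (hu.of_le le_top).comp (by fun_prop)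
  rw [← diffOp_eq_sum_range (N := n + 1) (by omega), diffOp_cexp_mul hw, hshift, diffOp_C_mul,
    diffOp_comp_C_mul_X (hu.of_le le_top), hrescale, diffOp_eq_sum_range (N := n + 1) (by omega),
    hode, mul_zero, mul_zero]

/-- The equivalence transformation `v(t) = exp (b t) · u (k t)` maps solutions of the
constant-coefficient linear ODE with characteristic polynomial `p` to solutions of the
ODE with characteristic polynomial `q = kⁿ · p ((X - b)/k)`, and `q` is again monic of
degree `n`. -/
theorem transformed_solution_solves_transformed_ode
    (p : ℂ[X]) (n : ℕ) (hn : 1 ≤ n) (hmonic : p.Monic) (hdeg : p.natDegree = n)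
    (k b : ℂ) (hk : k ≠ 0)
    (q : ℂ[X]) (hq : q = C (k ^ n) * p.comp (C k⁻¹ * (X - C b)))
    (u : ℂ → ℂ) (hu : ContDiff ℂ ⊤ u)
    (hode : ∀ t : ℂ,
      ∑ j ∈ Finset.range (n + 1), p.coeff j * iteratedDeriv j u t = 0) :
    (∀ t : ℂ,
      ∑ j ∈ Finset.range (n + 1),
        q.coeff j * iteratedDeriv j (fun s : ℂ => Complex.exp (b * s) * u (k * s)) t = 0)
    ∧ q.Monic ∧ q.natDegree = n :=
  transformed_solution_solves_transformed_ode_general p n hmonic hdeg k b hk q hq u hu hode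
end

section
/- Let s ∈ ℕ with s ≥ 1, let λ : Fin s → ℂ be injective, let m : Fin s → ℕ with m i ≥ 1 for all i, let n = Σ_i m i, and let p = ∏_i (X − C(λ i))^{m i} ∈ ℂ[X]. If u : ℝ → ℂ is n-times continuously differentiable and satisfies Σ_{k=0}^{n} pₖ · u⁽ᵏ⁾(x) = 0 for all x ∈ ℝ (pₖ the coefficient of Xᵏ in p, u⁽ᵏ⁾ the k-th iterated derivative), then u lies in the ℂ-linear span of the functions {x ↦ xʲ · exp(λ i · x) : i : Fin s, j < m i}. -/
/-!
Induction on `deg p`. Write `p = (X - λ) q`. If `u` solves the equation of `p`, then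
`v = u' - λ u` solves the equation of `q`, so by induction `v` lies in the span `V_q` of the
fundamental solutions of `q`. The operator `D - λ` maps the span `V_p` onto `V_q`: on
`xʲ e^{μx}` it lowers `j` when `μ = λ` and is triangular with diagonal `μ - λ ≠ 0` otherwise.
So `v = w' - λ w` with `w ∈ V_p`, and `u - w` solves `y' = λ y`, hence is a multiple of `e^{λx}`.
-/

open Polynomial Function

noncomputable def powMulExp (c : ℂ) (j : ℕ) (x : ℝ) : ℂ := (x : ℂ) ^ j * Complex.exp (c * x)

theorem hasDerivAt_powMulExp (c : ℂ) (j : ℕ) (x : ℝ) :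
    HasDerivAt (powMulExp c j) (j * powMulExp c (j - 1) x + c * powMulExp c j x) x := by
  have hpow : HasDerivAt (fun y : ℝ => (y : ℂ) ^ j) (j * (x : ℂ) ^ (j - 1)) x :=
    (hasDerivAt_pow j (x : ℂ)).comp_ofReal
  have hexp : HasDerivAt (fun y : ℝ => Complex.exp (c * y)) (c * Complex.exp (c * x)) x := by
    simpa [mul_comm] using (((hasDerivAt_id (x : ℂ)).const_mul c).cexp).comp_ofReal
  refine (hpow.mul hexp).congr_deriv ?_
  simp only [powMulExp]
  ring

theorem differentiable_powMulExp (c : ℂ) (j : ℕ) : Differentiable ℝ (powMulExp c j) :=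
  fun x => (hasDerivAt_powMulExp c j x).differentiableAt

-- At `j = 0` the truncated `j - 1` is harmless: its coefficient vanishes.
theorem deriv_powMulExp (c : ℂ) (j : ℕ) :
    deriv (powMulExp c j) = (j : ℂ) • powMulExp c (j - 1) + c • powMulExp c j :=
  funext fun x => (hasDerivAt_powMulExp c j x).deriv

theorem eq_smul_powMulExp_zero_of_deriv_eq_smul {c : ℂ} {g : ℝ → ℂ} (hg : Differentiable ℝ g)
    (h : deriv g = c • g) : g = g 0 • powMulExp c 0 := by
  have hconst : ∀ x, powMulExp (-c) 0 x * g x = g 0 := by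
    have hderiv : ∀ x, HasDerivAt (fun y => powMulExp (-c) 0 y * g y) 0 x := fun x => by
      refine ((hasDerivAt_powMulExp (-c) 0 x).mul (hg x).hasDerivAt).congr_deriv ?_
      rw [h]
      simp only [powMulExp, Pi.smul_apply, smul_eq_mul]
      ring
    intro x
    simpa [powMulExp] using is_const_of_deriv_eq_zero (fun y => (hderiv y).differentiableAt)
      (fun y => (hderiv y).deriv) x 0
  funext x
  rw [← hconst x]
  simp only [powMulExp, Pi.smul_apply, smul_eq_mul, pow_zero, one_mul]
  rw [mul_comm, ← mul_assoc, ← Complex.exp_add]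
  simp

def differentiableSubmodule : Submodule ℂ (ℝ → ℂ) where
  carrier := {f | Differentiable ℝ f}
  add_mem' := Differentiable.add
  zero_mem' := differentiable_const 0
  smul_mem' a _ hf := hf.const_smul a

/-- `deriv` is additive only on differentiable functions, hence the domain of `D - c`. -/
noncomputable def derivSubSMul (c : ℂ) : differentiableSubmodule →ₗ[ℂ] ℝ → ℂ where
  toFun f := deriv f - c • (f : ℝ → ℂ)
  map_add' f g := by
    have hf : Differentiable ℝ (f : ℝ → ℂ) := f.2
    have hg : Differentiable ℝ (g : ℝ → ℂ) := g.2
    ext x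
    simp [deriv_add (hf x) (hg x)]
    ring
  map_smul' a f := by
    have hf : Differentiable ℝ (f : ℝ → ℂ) := f.2
    ext x
    simp [deriv_const_smul a (hf x)]
    ring

theorem derivSubSMul_apply (c : ℂ) (f : differentiableSubmodule) :
    derivSubSMul c f = deriv f - c • (f : ℝ → ℂ) := rfl

theorem derivSubSMul_powMulExp (c μ : ℂ) (j : ℕ) :
    derivSubSMul c ⟨powMulExp μ j, differentiable_powMulExp μ j⟩
      = (μ - c) • powMulExp μ j + (j : ℂ) • powMulExp μ (j - 1) := by
  rw [derivSubSMul_apply, deriv_powMulExp, sub_smul]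
  abel

section

variable {W : Submodule ℂ (ℝ → ℂ)} {c μ : ℂ}

theorem derivSubSMul_powMulExp_mem_map {j : ℕ} (hW : powMulExp μ j ∈ W) :
    (μ - c) • powMulExp μ j + (j : ℂ) • powMulExp μ (j - 1)
      ∈ (W.comap differentiableSubmodule.subtype).map (derivSubSMul c) := by
  rw [← derivSubSMul_powMulExp]
  exact Submodule.mem_map_of_mem hW

theorem powMulExp_mem_map_derivSubSMul_self {j : ℕ} (hW : powMulExp c (j + 1) ∈ W) :
    powMulExp c j ∈ (W.comap differentiableSubmodule.subtype).map (derivSubSMul c) := by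
  have h := derivSubSMul_powMulExp_mem_map (c := c) hW
  rw [sub_self, zero_smul, zero_add, add_tsub_cancel_right] at h
  exact (Submodule.smul_mem_iff _ (Nat.cast_ne_zero.mpr j.succ_ne_zero)).mp h

theorem powMulExp_mem_map_derivSubSMul_of_ne (hμc : μ ≠ c) {j : ℕ}
    (hW : ∀ t ≤ j, powMulExp μ t ∈ W) :
    powMulExp μ j ∈ (W.comap differentiableSubmodule.subtype).map (derivSubSMul c) := by
  refine (Submodule.smul_mem_iff _ (sub_ne_zero.mpr hμc)).mp ?_
  induction j with
  | zero => simpa using derivSubSMul_powMulExp_mem_map (c := c) (hW 0 le_rfl)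
  | succ j ih =>
    have hj := (Submodule.smul_mem_iff _ (sub_ne_zero.mpr hμc)).mp
      (ih fun t ht => hW t (ht.trans j.le_succ))
    have h := derivSubSMul_powMulExp_mem_map (c := c) (hW (j + 1) le_rfl)
    rw [add_tsub_cancel_right] at h
    simpa using Submodule.sub_mem _ h (Submodule.smul_mem _ ((j + 1 : ℕ) : ℂ) hj)

end

section

variable {ι : Type*} (l : ι → ℂ) (m : ι → ℕ)

def fundamentalSolutions : Submodule ℂ (ℝ → ℂ) :=
  Submodule.span ℂ (Set.range fun q : Σ i, Fin (m i) => powMulExp (l q.1) q.2)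

variable {l m}

theorem powMulExp_mem_fundamentalSolutions {i : ι} {j : ℕ} (hj : j < m i) :
    powMulExp (l i) j ∈ fundamentalSolutions l m :=
  Submodule.subset_span ⟨⟨i, j, hj⟩, rfl⟩

variable [DecidableEq ι]

theorem fundamentalSolutions_update_le_map (hl : Injective l) (i₀ : ι) :
    fundamentalSolutions l (update m i₀ (m i₀ - 1)) ≤
      ((fundamentalSolutions l m).comap differentiableSubmodule.subtype).map
        (derivSubSMul (l i₀)) := by
  refine Submodule.span_le.mpr ?_
  rintro _ ⟨⟨i, j, hj⟩, rfl⟩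
  dsimp only
  by_cases hi : i = i₀
  · subst hi
    rw [update_self] at hj
    exact powMulExp_mem_map_derivSubSMul_self (powMulExp_mem_fundamentalSolutions (by omega))
  · rw [update_of_ne hi] at hj
    exact powMulExp_mem_map_derivSubSMul_of_ne (hl.ne hi) fun t ht =>
      powMulExp_mem_fundamentalSolutions (ht.trans_lt hj)

theorem mem_fundamentalSolutions_of_derivSubSMul_mem (hl : Injective l) {i₀ : ι}
    (hm : m i₀ ≠ 0) {u : ℝ → ℂ} (hu : Differentiable ℝ u)
    (h : deriv u - l i₀ • u ∈ fundamentalSolutions l (update m i₀ (m i₀ - 1))) :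
    u ∈ fundamentalSolutions l m := by
  obtain ⟨⟨w, hwd⟩, hw, hwu⟩ := fundamentalSolutions_update_le_map hl i₀ h
  change Differentiable ℝ w at hwd
  have hker : deriv (u - w) = l i₀ • (u - w) := by
    rw [derivSubSMul_apply] at hwu
    ext x
    have := congrFun hwu x
    simp only [Pi.sub_apply, Pi.smul_apply, smul_eq_mul] at this ⊢
    rw [deriv_sub (hu x) (hwd x)]
    linear_combination -this
  have hrepr : u = w + (u - w) 0 • powMulExp (l i₀) 0 := by
    rw [← eq_smul_powMulExp_zero_of_deriv_eq_smul (hu.sub hwd) hker]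
    abel
  rw [hrepr]
  exact Submodule.add_mem _ hw
    (Submodule.smul_mem _ _ (powMulExp_mem_fundamentalSolutions (Nat.pos_of_ne_zero hm)))

end

theorem iteratedDeriv_deriv_sub_smul {u : ℝ → ℂ} {N k : ℕ} (hu : ContDiff ℝ (N + 1) u)
    (hk : k ≤ N) (c : ℂ) (x : ℝ) :
    iteratedDeriv k (deriv u - c • u) x = iteratedDeriv (k + 1) u x - c * iteratedDeriv k u x := by
  have hkN : (k : WithTop ℕ∞) ≤ N := by exact_mod_cast hk
  have hderiv : ContDiff ℝ k (deriv u) := (hu.iterate_deriv' N 1).of_le hkN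
  have hu' : ContDiff ℝ k u := hu.of_le (hkN.trans le_self_add)
  have hsmul : ContDiffAt ℝ k (c • u) x := (hu'.const_smul c).contDiffAt
  rw [iteratedDeriv_sub hderiv.contDiffAt hsmul,
    iteratedDeriv_const_smul_field, iteratedDeriv_succ', smul_eq_mul]

theorem sum_coeff_X_sub_C_mul_iteratedDeriv (c : ℂ) {q : ℂ[X]} {N : ℕ} (hq : q.natDegree ≤ N)
    {u : ℝ → ℂ} (hu : ContDiff ℝ (N + 1) u) (x : ℝ) :
    ∑ k ∈ Finset.range (N + 2), ((X - C c) * q).coeff k * iteratedDeriv k u x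
      = ∑ k ∈ Finset.range (N + 1), q.coeff k * iteratedDeriv k (deriv u - c • u) x := by
  have hcoeff (k : ℕ) : ((X - C c) * q).coeff k = (X * q).coeff k - c * q.coeff k := by
    rw [sub_mul, coeff_sub, coeff_C_mul]
  have htop : q.coeff (N + 1) = 0 := coeff_eq_zero_of_natDegree_lt (Nat.lt_succ_of_le hq)
  simp_rw [hcoeff, sub_mul, Finset.sum_sub_distrib]
  rw [Finset.sum_range_succ', Finset.sum_range_succ _ (N + 1), htop]
  simp only [coeff_X_mul, mul_coeff_zero, coeff_X_zero, zero_mul, add_zero, mul_zero]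
  rw [← Finset.sum_sub_distrib]
  refine Finset.sum_congr rfl fun k hk => ?_
  rw [iteratedDeriv_deriv_sub_smul hu (Nat.lt_succ_iff.mp (Finset.mem_range.mp hk))]
  ring

theorem natDegree_prod_X_sub_C_pow {ι : Type*} [Fintype ι] (l : ι → ℂ) (m : ι → ℕ) :
    (∏ i, (X - C (l i)) ^ m i).natDegree = ∑ i, m i := by
  rw [natDegree_prod_of_monic _ _ fun i _ => (monic_X_sub_C (l i)).pow (m i)]
  simp

section

variable {ι : Type*} [Fintype ι] [DecidableEq ι] {m : ι → ℕ} {i₀ : ι}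

theorem update_apply_of_mem_compl {k : ℕ} {i : ι} (hi : i ∈ ({i₀}ᶜ : Finset ι)) :
    update m i₀ k i = m i :=
  update_of_ne (by simpa using hi) _ _

theorem sum_update_sub_one (hm : m i₀ ≠ 0) :
    ∑ i, update m i₀ (m i₀ - 1) i + 1 = ∑ i, m i := by
  rw [Fintype.sum_eq_add_sum_compl i₀, Fintype.sum_eq_add_sum_compl i₀ m, update_self,
    Finset.sum_congr rfl fun i => update_apply_of_mem_compl]
  omega

theorem prod_X_sub_C_pow_eq_mul_update (l : ι → ℂ) (hm : m i₀ ≠ 0) :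
    ∏ i, (X - C (l i)) ^ m i
      = (X - C (l i₀)) * ∏ i, (X - C (l i)) ^ update m i₀ (m i₀ - 1) i := by
  rw [Fintype.prod_eq_mul_prod_compl i₀, Fintype.prod_eq_mul_prod_compl i₀
    (fun i => (X - C (l i)) ^ update m i₀ (m i₀ - 1) i), update_self, ← mul_assoc,
    ← pow_succ', Nat.sub_add_cancel (Nat.pos_of_ne_zero hm)]
  exact congrArg _ (Finset.prod_congr rfl fun i hi => by rw [update_apply_of_mem_compl hi])

end

theorem mem_fundamentalSolutions_of_ode {ι : Type*} [Fintype ι] [DecidableEq ι] {l : ι → ℂ}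
    (hl : Injective l) {n : ℕ} {m : ι → ℕ} (hn : ∑ i, m i = n) {u : ℝ → ℂ}
    (hu : ContDiff ℝ n u)
    (hode : ∀ x : ℝ, ∑ k ∈ Finset.range (n + 1),
      (∏ i, (X - C (l i)) ^ m i).coeff k * iteratedDeriv k u x = 0) :
    u ∈ fundamentalSolutions l m := by
  induction n generalizing m u with
  | zero =>
    have hm : m = 0 := funext fun i => Finset.sum_eq_zero_iff.mp hn i (Finset.mem_univ i)
    have hu0 : u = 0 := funext fun x => by simpa [hm] using hode x
    rw [hu0]
    exact Submodule.zero_mem _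
  | succ n ih =>
    obtain ⟨i₀, hi₀⟩ : ∃ i₀, m i₀ ≠ 0 := by
      by_contra! h
      simp [h] at hn
    have hn' : ∑ i, update m i₀ (m i₀ - 1) i = n := by
      have := sum_update_sub_one hi₀
      omega
    have hu' : ContDiff ℝ (n + 1) u := by exact_mod_cast hu
    have hv : ContDiff ℝ n (deriv u - l i₀ • u) :=
      (hu'.iterate_deriv' n 1).sub ((hu'.of_le le_self_add).const_smul (l i₀))
    refine mem_fundamentalSolutions_of_derivSubSMul_mem hl hi₀ (hu'.differentiable (by simp))
      (ih hn' hv fun x => ?_)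
    rw [← sum_coeff_X_sub_C_mul_iteratedDeriv _
      ((natDegree_prod_X_sub_C_pow l _).trans_le hn'.le) hu',
      ← prod_X_sub_C_pow_eq_mul_update l hi₀]
    exact hode x

theorem solution_mem_span_fundamental_solutions_general
    (s : ℕ) (l : Fin s → ℂ) (hl : Function.Injective l)
    (m : Fin s → ℕ)
    (n : ℕ) (hn : n = ∑ i, m i)
    (p : ℂ[X]) (hp : p = ∏ i : Fin s, (X - C (l i)) ^ (m i))
    (u : ℝ → ℂ) (hu : ContDiff ℝ n u)
    (hode : ∀ x : ℝ,
      ∑ k ∈ Finset.range (n + 1), p.coeff k * iteratedDeriv k u x = 0) :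
    u ∈ Submodule.span ℂ
      (Set.range (fun q : Σ i : Fin s, Fin (m i) =>
        (fun x : ℝ => (x : ℂ) ^ (q.2 : ℕ) * Complex.exp (l q.1 * x)))) := by
  subst hp
  exact mem_fundamentalSolutions_of_ode hl hn.symm hu hode

/-- Every sufficiently smooth real-variable solution of the constant-coefficient
linear ODE with characteristic polynomial `p = ∏ᵢ (X - λᵢ)^{mᵢ}` (the `λᵢ` pairwise
distinct, `mᵢ ≥ 1`, `n = ∑ mᵢ`) is a ℂ-linear combination of the fundamental
solutions `x ↦ xʲ exp (λᵢ x)` with `j < mᵢ`. -/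
theorem solution_mem_span_fundamental_solutions
    (s : ℕ) (hs : 1 ≤ s) (l : Fin s → ℂ) (hl : Function.Injective l)
    (m : Fin s → ℕ) (hm : ∀ i, 1 ≤ m i)
    (n : ℕ) (hn : n = ∑ i, m i)
    (p : ℂ[X]) (hp : p = ∏ i : Fin s, (X - C (l i)) ^ (m i))
    (u : ℝ → ℂ) (hu : ContDiff ℝ n u)
    (hode : ∀ x : ℝ,
      ∑ k ∈ Finset.range (n + 1), p.coeff k * iteratedDeriv k u x = 0) :
    u ∈ Submodule.span ℂ
      (Set.range (fun q : Σ i : Fin s, Fin (m i) =>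
        (fun x : ℝ => (x : ℂ) ^ (q.2 : ℕ) * Complex.exp (l q.1 * x)))) :=
  solution_mem_span_fundamental_solutions_general s l hl m n hn p hp u hu hode
end
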